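/- Fix an integer p ≥ 1, a symmetric positive definite matrix Σ ∈ ℝ^{p×p}, a real τ > 0, and set n = tr((Σ + τ I)^{-1} Σ) and Ω = (1/n) tr(Σ²(Σ + τ I)^{-2}); assume 0 < Ω < 1. Fix β*, b ∈ ℝ^p and σ² ≥ 0, let θ₁ = (Σ + τ I)^{-1} Σ and γ²(b) = (p/n) (σ² + τ² ‖(Σ + τ I)^{-1} Σ^{1/2} b‖²)/(1 − Ω), and define R̄(β*, b) = (b − β*)ᵀ θ₁ᵀ Σ θ₁ (b − β*) + γ²(b) tr(Σ²(Σ+τI)^{-2})/p + β*ᵀ(I − θ₁)ᵀ Σ (I − θ₁) β* − 2 β*ᵀ(I − θ₁)ᵀ Σ θ₁ (b − β*). Then (i) R̄(β*, b) = ‖Σ^{1/2}(θ₁ b − β*)‖² + (Ω/(1 − Ω)) (σ² + τ² ‖(Σ + τ I)^{-1} Σ^{1/2} b‖²), and (ii) γ²(b) satisfies the fixed-point equation γ²(b) = (p/n)(σ² + R̄(b, b)). -/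

import Mathlib

/-! With `A = Σ + τ • 1`, the matrix `Σ^{1/2}` commutes with `A⁻¹` and `1 - θ₁ = τ • A⁻¹`, so
`τ² ‖A⁻¹ Σ^{1/2} b‖²` is the `Σ`-quadratic form of `(1 - θ₁) b`. Writing
`θ₁ b - β* = θ₁ (b - β*) - (1 - θ₁) β*` and expanding `‖Σ^{1/2} (θ₁ b - β*)‖²` gives the first
and third terms of `R̄` minus the cross term, while the variance term is
`γ²(b) tr(Σ² A⁻²) / p = Ω / (1 - Ω) · (σ² + τ² ‖A⁻¹ Σ^{1/2} b‖²)`. For `β* = b` only the bias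
and variance terms survive, and `σ² + R̄(b, b) = (σ² + τ² ‖A⁻¹ Σ^{1/2} b‖²) / (1 - Ω)`. -/

open Matrix

/-- `Matrix.PosSemidef.sqrt` was removed from Mathlib; restored here with its old definition. -/
noncomputable def Matrix.PosSemidef.sqrt {n 𝕜 : Type*} [Fintype n] [RCLike 𝕜] [PartialOrder 𝕜]
    [DecidableEq n]
    {A : Matrix n n 𝕜} (hA : A.PosSemidef) : Matrix n n 𝕜 :=
  hA.1.eigenvectorUnitary.1 * diagonal (fun i => ((hA.1.eigenvalues i).sqrt : 𝕜))
    * (star hA.1.eigenvectorUnitary : Matrix n n 𝕜)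

namespace Matrix

variable {ι R : Type*} [Fintype ι]

theorem IsSymm.dotProduct_mulVec_comm [CommSemiring R] {C : Matrix ι ι R} (hC : C.IsSymm)
    (x y : ι → R) : x ⬝ᵥ C *ᵥ y = y ⬝ᵥ C *ᵥ x := by
  rw [dotProduct_comm, dotProduct_mulVec, ← mulVec_transpose, hC.eq]

theorem IsSymm.sub_dotProduct_mulVec_sub [CommRing R] {C : Matrix ι ι R} (hC : C.IsSymm)
    (x y : ι → R) :
    (x - y) ⬝ᵥ C *ᵥ (x - y) = x ⬝ᵥ C *ᵥ x + y ⬝ᵥ C *ᵥ y - 2 * (y ⬝ᵥ C *ᵥ x) := by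
  simp only [mulVec_sub, dotProduct_sub, sub_dotProduct, hC.dotProduct_mulVec_comm x y]
  ring

variable [DecidableEq ι]

theorem Commute.nonsing_inv_right [CommRing R] {A B : Matrix ι ι R} (h : Commute A B) :
    Commute A B⁻¹ := by
  simpa only [zpow_neg_one] using Matrix.Commute.zpow_right h (-1)

theorem one_sub_inv_add_smul_one_mul [CommRing R] {A : Matrix ι ι R} {τ : R}
    (h : IsUnit (A + τ • 1).det) : 1 - (A + τ • 1)⁻¹ * A = τ • (A + τ • 1)⁻¹ := by
  have hinv := nonsing_inv_mul _ h
  rw [mul_add, Matrix.mul_smul, Matrix.mul_one] at hinv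
  exact sub_eq_of_eq_add' hinv.symm

namespace PosSemidef

variable {A : Matrix ι ι ℝ} (hA : A.PosSemidef)

theorem sqrt_mul_self : hA.sqrt * hA.sqrt = A := by
  set U : Matrix ι ι ℝ := hA.1.eigenvectorUnitary.1
  set D : Matrix ι ι ℝ := diagonal fun i ↦ √(hA.1.eigenvalues i)
  have hUU : star U * U = 1 := Unitary.coe_star_mul_self _
  have hDD : D * D = diagonal hA.1.eigenvalues := by
    rw [diagonal_mul_diagonal]
    exact congrArg diagonal (funext fun i ↦ Real.mul_self_sqrt (hA.eigenvalues_nonneg i))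
  calc hA.sqrt * hA.sqrt = U * (D * (star U * U) * D) * star U := by
        simp only [Matrix.PosSemidef.sqrt, Matrix.mul_assoc]; rfl
    _ = A := by
        rw [hUU, Matrix.mul_one, hDD]
        conv_rhs => rw [hA.1.spectral_theorem, Unitary.conjStarAlgAut_apply]
        rfl

theorem transpose_sqrt : hA.sqrtᵀ = hA.sqrt := by
  unfold Matrix.PosSemidef.sqrt
  rw [← conjTranspose_eq_transpose_of_trivial, star_eq_conjTranspose]
  exact (isHermitian_mul_mul_conjTranspose _ (isHermitian_diagonal _)).eq

theorem sqrt_mulVec_dotProduct_sqrt_mulVec (u : ι → ℝ) :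
    hA.sqrt *ᵥ u ⬝ᵥ hA.sqrt *ᵥ u = u ⬝ᵥ A *ᵥ u := by
  rw [dotProduct_mulVec, ← vecMul_transpose, vecMul_vecMul, ← dotProduct_mulVec,
    hA.transpose_sqrt, hA.sqrt_mul_self]

theorem commute_sqrt_inv_add_smul_one (τ : ℝ) : Commute hA.sqrt (A + τ • 1)⁻¹ := by
  have hA' : Commute hA.sqrt A := by
    simpa only [hA.sqrt_mul_self] using (Commute.refl hA.sqrt).mul_right (Commute.refl hA.sqrt)
  exact Matrix.Commute.nonsing_inv_right (hA'.add_right ((Commute.one_right _).smul_right τ))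

theorem dotProduct_mulVec_one_sub_inv_add_smul_one_mul {τ : ℝ} (hτ : 0 < τ) (v : ι → ℝ) :
    (1 - (A + τ • 1)⁻¹ * A) *ᵥ v ⬝ᵥ A *ᵥ ((1 - (A + τ • 1)⁻¹ * A) *ᵥ v) =
      τ ^ 2 * (((A + τ • 1)⁻¹ * hA.sqrt) *ᵥ v ⬝ᵥ ((A + τ • 1)⁻¹ * hA.sqrt) *ᵥ v) := by
  have hdet : IsUnit (A + τ • 1).det :=
    (isUnit_iff_isUnit_det _).mp (PosDef.posSemidef_add hA (PosDef.one.smul hτ)).isUnit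
  rw [(hA.commute_sqrt_inv_add_smul_one τ).symm.eq, ← mulVec_mulVec,
    hA.sqrt_mulVec_dotProduct_sqrt_mulVec, one_sub_inv_add_smul_one_mul hdet, smul_mulVec,
    mulVec_smul, smul_dotProduct, dotProduct_smul, smul_eq_mul, smul_eq_mul]
  ring

end PosSemidef

end Matrix

theorem surrogate_risk_closed_form_and_fixed_point_general
    (p : ℕ) (hp : 1 ≤ p)
    (Cov : Matrix (Fin p) (Fin p) ℝ) (hCov : Cov.PosDef)
    (τ : ℝ) (hτ : 0 < τ)
    (n Ω : ℝ)
    (hΩ : Ω = (1 / n) * (Cov ^ 2 * ((Cov + τ • (1 : Matrix (Fin p) (Fin p) ℝ))⁻¹) ^ 2).trace)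
    (hΩ1 : Ω < 1)
    (βstar b : Fin p → ℝ) (σsq : ℝ)
    (θ1 : Matrix (Fin p) (Fin p) ℝ)
    (hθ1 : θ1 = (Cov + τ • (1 : Matrix (Fin p) (Fin p) ℝ))⁻¹ * Cov)
    (γsq : (Fin p → ℝ) → ℝ)
    (hγ : ∀ v : Fin p → ℝ, γsq v = ((p : ℝ) / n) * (σsq + τ ^ 2 *
      ((((Cov + τ • (1 : Matrix (Fin p) (Fin p) ℝ))⁻¹ * hCov.posSemidef.sqrt).mulVec v) ⬝ᵥ
       (((Cov + τ • (1 : Matrix (Fin p) (Fin p) ℝ))⁻¹ * hCov.posSemidef.sqrt).mulVec v))) / (1 - Ω))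
    (Rbar : (Fin p → ℝ) → (Fin p → ℝ) → ℝ)
    (hR : ∀ β v : Fin p → ℝ, Rbar β v =
      (θ1.mulVec (v - β)) ⬝ᵥ (Cov.mulVec (θ1.mulVec (v - β)))
      + γsq v * (Cov ^ 2 * ((Cov + τ • (1 : Matrix (Fin p) (Fin p) ℝ))⁻¹) ^ 2).trace / p
      + ((1 - θ1).mulVec β) ⬝ᵥ (Cov.mulVec ((1 - θ1).mulVec β))
      - 2 * (((1 - θ1).mulVec β) ⬝ᵥ (Cov.mulVec (θ1.mulVec (v - β))))) :
    Rbar βstar b =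
      ((hCov.posSemidef.sqrt.mulVec (θ1.mulVec b - βstar)) ⬝ᵥ
        (hCov.posSemidef.sqrt.mulVec (θ1.mulVec b - βstar)))
      + (Ω / (1 - Ω)) * (σsq + τ ^ 2 *
        ((((Cov + τ • (1 : Matrix (Fin p) (Fin p) ℝ))⁻¹ * hCov.posSemidef.sqrt).mulVec b) ⬝ᵥ
         (((Cov + τ • (1 : Matrix (Fin p) (Fin p) ℝ))⁻¹ * hCov.posSemidef.sqrt).mulVec b)))
    ∧ γsq b = ((p : ℝ) / n) * (σsq + Rbar b b) := by
  subst hθ1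
  set A := Cov + τ • (1 : Matrix (Fin p) (Fin p) ℝ)
  set M := hCov.posSemidef.sqrt
  have hvariance : γsq b * (Cov ^ 2 * (A⁻¹) ^ 2).trace / p =
      Ω / (1 - Ω) * (σsq + τ ^ 2 * ((A⁻¹ * M) *ᵥ b ⬝ᵥ (A⁻¹ * M) *ᵥ b)) := by
    have hp0 : (p : ℝ) ≠ 0 := by positivity
    rw [hγ, hΩ]
    field_simp
  constructor
  · have hsplit : (A⁻¹ * Cov) *ᵥ b - βstar =
        (A⁻¹ * Cov) *ᵥ (b - βstar) - (1 - A⁻¹ * Cov) *ᵥ βstar := by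
      rw [mulVec_sub, sub_mulVec, one_mulVec]
      abel
    rw [hR, hvariance, hCov.posSemidef.sqrt_mulVec_dotProduct_sqrt_mulVec, hsplit,
      (isHermitian_iff_isSymm.mp hCov.isHermitian).sub_dotProduct_mulVec_sub]
    ring
  · have h1Ω : 1 - Ω ≠ 0 := sub_ne_zero.mpr hΩ1.ne'
    rw [hR, hvariance, hCov.posSemidef.dotProduct_mulVec_one_sub_inv_add_smul_one_mul hτ,
      sub_self, mulVec_zero, zero_dotProduct, mulVec_zero, dotProduct_zero, hγ]
    field_simp
    ring

/-- Closed form of the asymptotic surrogate-to-target risk and the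
fixed-point equation for `γ²`. -/
theorem surrogate_risk_closed_form_and_fixed_point
    (p : ℕ) (hp : 1 ≤ p)
    (Cov : Matrix (Fin p) (Fin p) ℝ) (hCov : Cov.PosDef)
    (τ : ℝ) (hτ : 0 < τ)
    (n Ω : ℝ)
    (hn : n = ((Cov + τ • (1 : Matrix (Fin p) (Fin p) ℝ))⁻¹ * Cov).trace)
    (hΩ : Ω = (1 / n) * (Cov ^ 2 * ((Cov + τ • (1 : Matrix (Fin p) (Fin p) ℝ))⁻¹) ^ 2).trace)
    (hΩ0 : 0 < Ω) (hΩ1 : Ω < 1)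
    (βstar b : Fin p → ℝ) (σsq : ℝ) (hσ : 0 ≤ σsq)
    (θ1 : Matrix (Fin p) (Fin p) ℝ)
    (hθ1 : θ1 = (Cov + τ • (1 : Matrix (Fin p) (Fin p) ℝ))⁻¹ * Cov)
    (γsq : (Fin p → ℝ) → ℝ)
    (hγ : ∀ v : Fin p → ℝ, γsq v = ((p : ℝ) / n) * (σsq + τ ^ 2 *
      ((((Cov + τ • (1 : Matrix (Fin p) (Fin p) ℝ))⁻¹ * hCov.posSemidef.sqrt).mulVec v) ⬝ᵥ
       (((Cov + τ • (1 : Matrix (Fin p) (Fin p) ℝ))⁻¹ * hCov.posSemidef.sqrt).mulVec v))) / (1 - Ω))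
    (Rbar : (Fin p → ℝ) → (Fin p → ℝ) → ℝ)
    (hR : ∀ β v : Fin p → ℝ, Rbar β v =
      (θ1.mulVec (v - β)) ⬝ᵥ (Cov.mulVec (θ1.mulVec (v - β)))
      + γsq v * (Cov ^ 2 * ((Cov + τ • (1 : Matrix (Fin p) (Fin p) ℝ))⁻¹) ^ 2).trace / p
      + ((1 - θ1).mulVec β) ⬝ᵥ (Cov.mulVec ((1 - θ1).mulVec β))
      - 2 * (((1 - θ1).mulVec β) ⬝ᵥ (Cov.mulVec (θ1.mulVec (v - β))))) :
    Rbar βstar b =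
      ((hCov.posSemidef.sqrt.mulVec (θ1.mulVec b - βstar)) ⬝ᵥ
        (hCov.posSemidef.sqrt.mulVec (θ1.mulVec b - βstar)))
      + (Ω / (1 - Ω)) * (σsq + τ ^ 2 *
        ((((Cov + τ • (1 : Matrix (Fin p) (Fin p) ℝ))⁻¹ * hCov.posSemidef.sqrt).mulVec b) ⬝ᵥ
         (((Cov + τ • (1 : Matrix (Fin p) (Fin p) ℝ))⁻¹ * hCov.posSemidef.sqrt).mulVec b)))
    ∧ γsq b = ((p : ℝ) / n) * (σsq + Rbar b b) :=
  surrogate_risk_closed_form_and_fixed_point_general p hp Cov hCov τ hτ n Ω hΩ hΩ1 βstar b σsq θ1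
    hθ1 γsq hγ Rbar hR
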